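/- arXiv:1810.11643 — 5 statements merged into one kernel-verified Lean document; each statement's English description precedes it below -/
import Mathlib

section
/- Approximate submultiplicativity: define 𝓛_k(n,m) = |n|_{l^k}^{−d}|n−m|_{l^k}^{−d} + |m|_{l^k}^{−d}|n−m|_{l^k}^{−d} + |n|_{l^k}^{−d}|m|_{l^k}^{−d} with |r|_{l^k}^{−d} = (1+|r|)^{−d} log^k(e+|r|). Then there exists C such that for all m, n ∈ Λ, Σ_{ℓ ∈ Λ} 𝓛_1(m,ℓ) 𝓛_1(ℓ,n) ≤ C 𝓛_1(m,n). -/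
open scoped BigOperators
open Matrix

/-- The Euclidean norm of a vector in `ℝ^d`. -/
noncomputable def eunorm (d : ℕ) (x : Fin d → ℝ) : ℝ :=
  ‖(WithLp.equiv 2 (Fin d → ℝ)).symm x‖

/-- The weight `|r|_{l^α}^{−q} = (1+r)^{−q} · log^α(e+r)`. -/
noncomputable def wt (α q r : ℝ) : ℝ :=
  (1 + r) ^ (-q) * Real.log (Real.exp 1 + r) ^ α

/-- The kernel `𝓛_k(n,m) = |n|_{l^k}^{−d}|n−m|_{l^k}^{−d} + |m|_{l^k}^{−d}|n−m|_{l^k}^{−d}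
  + |n|_{l^k}^{−d}|m|_{l^k}^{−d}`. -/
noncomputable def scrL (d : ℕ) (k : ℝ) (n m : Fin d → ℝ) : ℝ :=
  wt k d (eunorm d n) * wt k d (eunorm d (n - m)) +
    wt k d (eunorm d m) * wt k d (eunorm d (n - m)) +
    wt k d (eunorm d n) * wt k d (eunorm d m)

/-! ### Auxiliary lemmas -/

lemma wt_aux_log_pos {r : ℝ} (hr : 0 ≤ r) : 1 ≤ Real.log (Real.exp 1 + r) := by
  have h1 : Real.log (Real.exp 1) ≤ Real.log (Real.exp 1 + r) :=
    Real.log_le_log (Real.exp_pos 1) (by linarith)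
  simpa using h1

/-- Shorthand for the basic weight `W d r = (1+r)^{-d} log(e+r)`. -/
noncomputable def W (d : ℕ) (r : ℝ) : ℝ := (1 + r) ^ (-(d:ℝ)) * Real.log (Real.exp 1 + r)

lemma wt_one_eq (d : ℕ) (r : ℝ) : wt 1 d r = W d r := by
  rw [wt, W, Real.rpow_one]

lemma W_nonneg {d : ℕ} {r : ℝ} (hr : 0 ≤ r) : 0 ≤ W d r :=
  mul_nonneg (Real.rpow_nonneg (by linarith) _) (by linarith [wt_aux_log_pos hr])

lemma g_anti {r s : ℝ} (hr : 0 ≤ r) (hrs : r ≤ s) :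
    (1 + s)⁻¹ * Real.log (Real.exp 1 + s) ≤ (1 + r)⁻¹ * Real.log (Real.exp 1 + r) := by
  have hs : 0 ≤ s := hr.trans hrs
  have h1 : (0:ℝ) < 1 + r := by linarith
  have h2 : (0:ℝ) < 1 + s := by linarith
  have hex : (1:ℝ) ≤ Real.exp 1 := by linarith [Real.add_one_le_exp (1:ℝ)]
  have he : (0:ℝ) < Real.exp 1 + r := by linarith
  have he2 : (0:ℝ) < Real.exp 1 + s := by linarith
  have hLr : 1 ≤ Real.log (Real.exp 1 + r) := wt_aux_log_pos hr
  have key : Real.log (Real.exp 1 + s) ≤ Real.log (Real.exp 1 + r) + (s - r) / (Real.exp 1 + r) := by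
    have h3 := Real.log_le_sub_one_of_pos (show (0:ℝ) < (Real.exp 1 + s)/(Real.exp 1 + r) by positivity)
    rw [Real.log_div (by positivity) (by positivity)] at h3
    have heq : (Real.exp 1 + s)/(Real.exp 1 + r) - 1 = (s - r)/(Real.exp 1 + r) := by
      field_simp
      ring
    linarith [heq ▸ h3]
  have h4 : (1+r) * ((s-r)/(Real.exp 1 + r)) ≤ s - r := by
    rw [mul_div_assoc', div_le_iff₀ he]
    nlinarith
  rw [inv_mul_eq_div, inv_mul_eq_div, div_le_div_iff₀ h2 h1]
  nlinarith [mul_le_mul_of_nonneg_right key h1.le]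

lemma W_anti {d : ℕ} (hd : 1 ≤ d) {r s : ℝ} (hr : 0 ≤ r) (hrs : r ≤ s) :
    W d s ≤ W d r := by
  have hs : 0 ≤ s := hr.trans hrs
  have h1 : (0:ℝ) < 1 + r := by linarith
  have h2 : (0:ℝ) < 1 + s := by linarith
  have hsplit : ∀ ρ : ℝ, 0 ≤ ρ →
      W d ρ = (1 + ρ) ^ (-((d:ℝ) - 1)) * ((1 + ρ)⁻¹ * Real.log (Real.exp 1 + ρ)) := by
    intro ρ hρ
    have hρ1 : (0:ℝ) < 1 + ρ := by linarith
    rw [W, show (-(d:ℝ)) = (-((d:ℝ) - 1)) + (-1) by ring, Real.rpow_add hρ1,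
      Real.rpow_neg_one, mul_assoc]
  rw [hsplit r hr, hsplit s hs]
  have hexp : -((d:ℝ) - 1) ≤ 0 := by
    have : (1:ℝ) ≤ (d:ℝ) := by exact_mod_cast hd
    linarith
  have f1 : (1 + s) ^ (-((d:ℝ) - 1)) ≤ (1 + r) ^ (-((d:ℝ) - 1)) :=
    Real.rpow_le_rpow_of_nonpos h1 (by linarith) hexp
  have f2 := g_anti hr hrs
  have n2 : 0 ≤ (1 + s)⁻¹ * Real.log (Real.exp 1 + s) :=
    mul_nonneg (by positivity) (by linarith [wt_aux_log_pos hs])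
  have n3 : 0 ≤ (1 + r) ^ (-((d:ℝ) - 1)) := Real.rpow_nonneg h1.le _
  exact mul_le_mul f1 f2 n2 n3

lemma W_double {d : ℕ} {c : ℝ} (hc : 0 ≤ c) : W d (c/2) ≤ 2 ^ (d:ℝ) * W d c := by
  have h1 : (0:ℝ) < (1 + c)/2 := by linarith
  have f1 : (1 + c/2) ^ (-(d:ℝ)) ≤ ((1 + c)/2) ^ (-(d:ℝ)) :=
    Real.rpow_le_rpow_of_nonpos h1 (by linarith) (neg_nonpos.mpr (Nat.cast_nonneg d))
  have f2 : ((1 + c)/2 : ℝ) ^ (-(d:ℝ)) = 2 ^ (d:ℝ) * (1 + c) ^ (-(d:ℝ)) := by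
    rw [Real.div_rpow (by linarith) (by norm_num), Real.rpow_neg (by norm_num : (0:ℝ) ≤ 2)]
    field_simp
  have f3 : Real.log (Real.exp 1 + c/2) ≤ Real.log (Real.exp 1 + c) :=
    Real.log_le_log (by positivity) (by linarith)
  have n1 : 0 ≤ Real.log (Real.exp 1 + c/2) := by linarith [wt_aux_log_pos (by linarith : (0:ℝ) ≤ c/2)]
  calc W d (c/2) = (1 + c/2) ^ (-(d:ℝ)) * Real.log (Real.exp 1 + c/2) := rfl
    _ ≤ (2 ^ (d:ℝ) * (1 + c) ^ (-(d:ℝ))) * Real.log (Real.exp 1 + c) := by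
        rw [← f2]; exact mul_le_mul f1 f3 n1 (by positivity)
    _ = 2 ^ (d:ℝ) * W d c := by rw [W]; ring

lemma W_L1 {d : ℕ} (hd : 1 ≤ d) {s t c : ℝ} (hs : 0 ≤ s) (ht : 0 ≤ t) (hc : 0 ≤ c)
    (htri : c ≤ s + t) :
    W d s * W d t ≤ 2 ^ (d:ℝ) * W d c * (W d s + W d t) := by
  have hkey : ∀ u v : ℝ, 0 ≤ u → 0 ≤ v → c/2 ≤ u →
      W d u * W d v ≤ 2 ^ (d:ℝ) * W d c * (W d u + W d v) := by
    intro u v hu hv huc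
    have h1 : W d u ≤ 2 ^ (d:ℝ) * W d c :=
      le_trans (W_anti hd (by linarith) huc) (W_double hc)
    have := mul_le_mul_of_nonneg_right h1 (W_nonneg (d := d) hv)
    nlinarith [W_nonneg (d := d) hu, W_nonneg (d := d) hv,
      mul_nonneg (mul_nonneg (by positivity : (0:ℝ) ≤ 2 ^ (d:ℝ)) (W_nonneg (d := d) hc))
        (W_nonneg (d := d) hu)]
  rcases le_or_gt (c/2) s with h | h
  · exact hkey s t hs ht h
  · have := hkey t s ht hs (by linarith)
    nlinarith [this]

set_option maxHeartbeats 2000000 in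
lemma master {D Ha Hb Hab Hx Hxa Hxb : ℝ}
    (hD : 1 ≤ D) (h0a : 0 ≤ Ha) (h0b : 0 ≤ Hb) (h0ab : 0 ≤ Hab)
    (h0x : 0 ≤ Hx) (h0xa : 0 ≤ Hxa) (h0xb : 0 ≤ Hxb)
    (h1 : Hxa * Hxb ≤ D * Hab * (Hxa + Hxb))
    (h2 : Hx * Hxa ≤ D * Ha * (Hx + Hxa))
    (h3 : Hx * Hxb ≤ D * Hb * (Hx + Hxb)) :
    (Ha * Hxa + Hx * Hxa + Ha * Hx) * (Hx * Hxb + Hb * Hxb + Hx * Hb) ≤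
      36 * D ^ 2 * ((Ha * Hab + Hb * Hab + Ha * Hb) * (Hx ^ 2 + Hxa ^ 2 + Hxb ^ 2)) := by
  set T := Ha * Hab + Hb * Hab + Ha * Hb with hT
  set Ψ := Hx ^ 2 + Hxa ^ 2 + Hxb ^ 2 with hΨ
  have hT0 : 0 ≤ T := by positivity
  have hΨ0 : 0 ≤ Ψ := by positivity
  have hD0 : 0 ≤ D := by linarith
  have hP1 : Hx * Hxa ≤ Ψ := by linarith [sq_nonneg (Hx - Hxa), sq_nonneg Hxb]
  have hP2 : Hx * Hxb ≤ Ψ := by linarith [sq_nonneg (Hx - Hxb), sq_nonneg Hxa]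
  have hP3 : Hxa * Hxb ≤ Ψ := by linarith [sq_nonneg (Hxa - Hxb), sq_nonneg Hx]
  have hx2 : Hx ^ 2 ≤ Ψ := by linarith [sq_nonneg Hxa, sq_nonneg Hxb]
  have hTa : Ha * Hab ≤ T := by linarith [mul_nonneg h0b h0ab, mul_nonneg h0a h0b]
  have hTb : Hb * Hab ≤ T := by linarith [mul_nonneg h0a h0ab, mul_nonneg h0a h0b]
  have hTc : Ha * Hb ≤ T := by linarith [mul_nonneg h0a h0ab, mul_nonneg h0b h0ab]
  have hTΨ0 : 0 ≤ T * Ψ := mul_nonneg hT0 hΨ0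
  have h1D : (1:ℝ) ≤ D ^ 2 := by nlinarith
  have hDD : D ≤ D ^ 2 := by nlinarith
  have hM : T * Ψ ≤ D ^ 2 * (T * Ψ) := by
    calc T * Ψ = 1 * (T * Ψ) := by ring
      _ ≤ D ^ 2 * (T * Ψ) := mul_le_mul_of_nonneg_right h1D hTΨ0
  have hM2 : D * (T * Ψ) ≤ D ^ 2 * (T * Ψ) := mul_le_mul_of_nonneg_right hDD hTΨ0
  -- bounds for the six basic products against T * Ψ
  have bTa1 : Ha * Hab * (Hx * Hxa) ≤ T * Ψ := mul_le_mul hTa hP1 (by positivity) hT0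
  have bTa2 : Ha * Hab * (Hx * Hxb) ≤ T * Ψ := mul_le_mul hTa hP2 (by positivity) hT0
  have bTa0 : Ha * Hab * Hx ^ 2 ≤ T * Ψ := mul_le_mul hTa hx2 (by positivity) hT0
  have bTb1 : Hb * Hab * (Hx * Hxa) ≤ T * Ψ := mul_le_mul hTb hP1 (by positivity) hT0
  have bTb2 : Hb * Hab * (Hx * Hxb) ≤ T * Ψ := mul_le_mul hTb hP2 (by positivity) hT0
  have bTb0 : Hb * Hab * Hx ^ 2 ≤ T * Ψ := mul_le_mul hTb hx2 (by positivity) hT0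
  have bTc1 : Ha * Hb * (Hx * Hxa) ≤ T * Ψ := mul_le_mul hTc hP1 (by positivity) hT0
  have bTc2 : Ha * Hb * (Hx * Hxb) ≤ T * Ψ := mul_le_mul hTc hP2 (by positivity) hT0
  have bTc3 : Ha * Hb * (Hxa * Hxb) ≤ T * Ψ := mul_le_mul hTc hP3 (by positivity) hT0
  have bTc0 : Ha * Hb * Hx ^ 2 ≤ T * Ψ := mul_le_mul hTc hx2 (by positivity) hT0
  have t1 : Ha * Hxa * (Hx * Hxb) ≤ 2 * (D * (T * Ψ)) := by
    have e2 : Ha * Hx * (Hxa * Hxb) ≤ Ha * Hx * (D * Hab * (Hxa + Hxb)) :=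
      mul_le_mul_of_nonneg_left h1 (by positivity)
    have e4 := mul_le_mul_of_nonneg_left bTa1 hD0
    have e5 := mul_le_mul_of_nonneg_left bTa2 hD0
    linarith [e2, e4, e5]
  have t2 : Ha * Hxa * (Hb * Hxb) ≤ T * Ψ := by linarith [bTc3]
  have t3 : Ha * Hxa * (Hx * Hb) ≤ T * Ψ := by linarith [bTc1]
  have t4 : Hx * Hxa * (Hx * Hxb) ≤ 4 * (D ^ 2 * (T * Ψ)) := by
    have e2 : Hx * Hx * (Hxa * Hxb) ≤ Hx * Hx * (D * Hab * (Hxa + Hxb)) :=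
      mul_le_mul_of_nonneg_left h1 (by positivity)
    have e4 : (D * Hab) * (Hx * Hxa * Hx) ≤ (D * Hab) * (D * Ha * (Hx + Hxa) * Hx) := by
      have := mul_le_mul_of_nonneg_right h2 h0x
      exact mul_le_mul_of_nonneg_left this (by positivity)
    have e5 : (D * Hab) * (Hx * Hxb * Hx) ≤ (D * Hab) * (D * Hb * (Hx + Hxb) * Hx) := by
      have := mul_le_mul_of_nonneg_right h3 h0x
      exact mul_le_mul_of_nonneg_left this (by positivity)
    have f1 := mul_le_mul_of_nonneg_left bTa0 (by positivity : (0:ℝ) ≤ D ^ 2)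
    have f2 := mul_le_mul_of_nonneg_left bTa1 (by positivity : (0:ℝ) ≤ D ^ 2)
    have f3 := mul_le_mul_of_nonneg_left bTb0 (by positivity : (0:ℝ) ≤ D ^ 2)
    have f4 := mul_le_mul_of_nonneg_left bTb2 (by positivity : (0:ℝ) ≤ D ^ 2)
    linarith [e2, e4, e5, f1, f2, f3, f4]
  have t5 : Hx * Hxa * (Hb * Hxb) ≤ 2 * (D * (T * Ψ)) := by
    have e2 : Hb * Hx * (Hxa * Hxb) ≤ Hb * Hx * (D * Hab * (Hxa + Hxb)) :=
      mul_le_mul_of_nonneg_left h1 (by positivity)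
    have e4 := mul_le_mul_of_nonneg_left bTb1 hD0
    have e5 := mul_le_mul_of_nonneg_left bTb2 hD0
    linarith [e2, e4, e5]
  have t6 : Hx * Hxa * (Hx * Hb) ≤ 2 * (D * (T * Ψ)) := by
    have e2 : Hb * Hx * (Hx * Hxa) ≤ Hb * Hx * (D * Ha * (Hx + Hxa)) :=
      mul_le_mul_of_nonneg_left h2 (by positivity)
    have e4 := mul_le_mul_of_nonneg_left bTc0 hD0
    have e5 := mul_le_mul_of_nonneg_left bTc1 hD0
    linarith [e2, e4, e5]
  have t7 : Ha * Hx * (Hx * Hxb) ≤ 2 * (D * (T * Ψ)) := by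
    have e2 : Ha * Hx * (Hx * Hxb) ≤ Ha * Hx * (D * Hb * (Hx + Hxb)) :=
      mul_le_mul_of_nonneg_left h3 (by positivity)
    have e4 := mul_le_mul_of_nonneg_left bTc0 hD0
    have e5 := mul_le_mul_of_nonneg_left bTc2 hD0
    linarith [e2, e4, e5]
  have t8 : Ha * Hx * (Hb * Hxb) ≤ T * Ψ := by linarith [bTc2]
  have t9 : Ha * Hx * (Hx * Hb) ≤ T * Ψ := by linarith [bTc0]
  linarith [t1, t2, t3, t4, t5, t6, t7, t8, t9, hM, hM2, hTΨ0]
lemma Wsq_bound {d : ℕ} (hd : 1 ≤ d) {M r : ℝ} (hM : 1 ≤ M) (hr : 0 ≤ r)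
    (a : Fin d → ℝ) (ha1 : ∀ j, 1 ≤ a j) (ha2 : ∀ j, a j ≤ M * (1 + r)) :
    W d r ^ 2 * ∏ j, a j ^ ((3:ℝ)/2) ≤
      64 * Real.exp 1 ^ ((1:ℝ)/4) * M ^ ((3:ℝ)*d/2) := by
  have hd' : (1:ℝ) ≤ (d:ℝ) := by exact_mod_cast hd
  have hP : (1:ℝ) ≤ 1 + r := by linarith
  have hP0 : (0:ℝ) < 1 + r := by linarith
  have he : (0:ℝ) < Real.exp 1 + r := by positivity
  have hex : (1:ℝ) ≤ Real.exp 1 := by linarith [Real.add_one_le_exp (1:ℝ)]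
  -- product bound
  have s1 : (∏ j, a j ^ ((3:ℝ)/2)) = (∏ j, a j) ^ ((3:ℝ)/2) :=
    Real.finset_prod_rpow Finset.univ a (fun i _ => by linarith [ha1 i]) _
  have s2 : (∏ j, a j) ≤ (M * (1 + r)) ^ (d:ℕ) := by
    calc (∏ j, a j) ≤ ∏ _j : Fin d, (M * (1 + r)) :=
          Finset.prod_le_prod (fun i _ => by linarith [ha1 i]) (fun i _ => ha2 i)
      _ = (M * (1 + r)) ^ (d:ℕ) := by simp
  have s3 : (∏ j, a j) ^ ((3:ℝ)/2) ≤ ((M * (1 + r)) ^ (d:ℕ)) ^ ((3:ℝ)/2) :=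
    Real.rpow_le_rpow (Finset.prod_nonneg fun i _ => by linarith [ha1 i]) s2 (by norm_num)
  have s4 : ((M * (1 + r)) ^ (d:ℕ)) ^ ((3:ℝ)/2) = M ^ ((3:ℝ)*d/2) * (1 + r) ^ ((3:ℝ)*d/2) := by
    rw [← Real.rpow_natCast (M * (1 + r)) d, ← Real.rpow_mul (by positivity),
      Real.mul_rpow (by linarith) hP0.le]
    ring_nf
  have s5 : (1 + r) ^ ((3:ℝ)*d/2) ≤ (1 + r) ^ (2*(d:ℝ) - 1/4) :=
    Real.rpow_le_rpow_of_exponent_le hP (by linarith)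
  have prodbd : (∏ j, a j ^ ((3:ℝ)/2)) ≤ M ^ ((3:ℝ)*d/2) * (1 + r) ^ (2*(d:ℝ) - 1/4) := by
    rw [s1]
    calc (∏ j, a j) ^ ((3:ℝ)/2) ≤ M ^ ((3:ℝ)*d/2) * (1 + r) ^ ((3:ℝ)*d/2) := by
          rw [← s4]; exact s3
      _ ≤ M ^ ((3:ℝ)*d/2) * (1 + r) ^ (2*(d:ℝ) - 1/4) :=
          mul_le_mul_of_nonneg_left s5 (Real.rpow_nonneg (by linarith) _)
  -- log bound
  have s6 : Real.log (Real.exp 1 + r) ≤ 8 * (Real.exp 1 + r) ^ ((1:ℝ)/8) := by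
    have h1 := Real.log_le_sub_one_of_pos (show (0:ℝ) < (Real.exp 1 + r) ^ ((1:ℝ)/8) by positivity)
    rw [Real.log_rpow he] at h1
    nlinarith [Real.rpow_nonneg he.le ((1:ℝ)/8)]
  have s7 : Real.log (Real.exp 1 + r) ^ 2 ≤ 64 * (Real.exp 1 + r) ^ ((1:ℝ)/4) := by
    have h1 : Real.log (Real.exp 1 + r) ^ 2 ≤ (8 * (Real.exp 1 + r) ^ ((1:ℝ)/8)) ^ 2 := by
      have hl : 0 ≤ Real.log (Real.exp 1 + r) := by linarith [wt_aux_log_pos hr]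
      exact pow_le_pow_left₀ hl s6 2
    have h2 : (8 * (Real.exp 1 + r) ^ ((1:ℝ)/8)) ^ 2 = 64 * (Real.exp 1 + r) ^ ((1:ℝ)/4) := by
      rw [mul_pow, ← Real.rpow_natCast ((Real.exp 1 + r) ^ ((1:ℝ)/8)) 2, ← Real.rpow_mul he.le]
      norm_num
    linarith
  have s8 : (Real.exp 1 + r) ^ ((1:ℝ)/4) ≤ Real.exp 1 ^ ((1:ℝ)/4) * (1 + r) ^ ((1:ℝ)/4) := by
    rw [← Real.mul_rpow (Real.exp_nonneg 1) hP0.le]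
    exact Real.rpow_le_rpow he.le (by nlinarith) (by norm_num)
  -- W squared
  have sW : W d r ^ 2 = (1 + r) ^ (-(2*(d:ℝ))) * Real.log (Real.exp 1 + r) ^ 2 := by
    rw [W, mul_pow, ← Real.rpow_natCast ((1 + r) ^ (-(d:ℝ))) 2, ← Real.rpow_mul hP0.le]
    congr 2
    push_cast
    ring
  have hlog2 : Real.log (Real.exp 1 + r) ^ 2 ≤
      64 * Real.exp 1 ^ ((1:ℝ)/4) * (1 + r) ^ ((1:ℝ)/4) := by
    calc Real.log (Real.exp 1 + r) ^ 2 ≤ 64 * (Real.exp 1 + r) ^ ((1:ℝ)/4) := s7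
      _ ≤ 64 * (Real.exp 1 ^ ((1:ℝ)/4) * (1 + r) ^ ((1:ℝ)/4)) := by linarith
      _ = 64 * Real.exp 1 ^ ((1:ℝ)/4) * (1 + r) ^ ((1:ℝ)/4) := by ring
  -- assemble
  have key : W d r ^ 2 * ∏ j, a j ^ ((3:ℝ)/2) ≤
      ((1 + r) ^ (-(2*(d:ℝ))) * (64 * Real.exp 1 ^ ((1:ℝ)/4) * (1 + r) ^ ((1:ℝ)/4))) *
        (M ^ ((3:ℝ)*d/2) * (1 + r) ^ (2*(d:ℝ) - 1/4)) := by
    rw [sW]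
    apply mul_le_mul
    · exact mul_le_mul_of_nonneg_left hlog2 (Real.rpow_nonneg hP0.le _)
    · exact prodbd
    · exact Finset.prod_nonneg fun i _ => Real.rpow_nonneg (by linarith [ha1 i]) _
    · positivity
  have collapse : (1 + r) ^ (-(2*(d:ℝ))) * (1 + r) ^ ((1:ℝ)/4) * (1 + r) ^ (2*(d:ℝ) - 1/4) = 1 := by
    rw [← Real.rpow_add hP0, ← Real.rpow_add hP0]
    norm_num
  calc W d r ^ 2 * ∏ j, a j ^ ((3:ℝ)/2) ≤ _ := key
    _ = 64 * Real.exp 1 ^ ((1:ℝ)/4) * M ^ ((3:ℝ)*d/2) *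
        ((1 + r) ^ (-(2*(d:ℝ))) * (1 + r) ^ ((1:ℝ)/4) * (1 + r) ^ (2*(d:ℝ) - 1/4)) := by ring
    _ = 64 * Real.exp 1 ^ ((1:ℝ)/4) * M ^ ((3:ℝ)*d/2) := by rw [collapse, mul_one]


lemma pi_tsum_prod (m : ℕ) (G : ℤ → ENNReal) :
    ∑' z : Fin m → ℤ, ∏ j, G (z j) = (∑' n : ℤ, G n) ^ m := by
  induction m with
  | zero =>
      rw [tsum_fintype]
      simp
  | succ m ih =>
      calc ∑' z : Fin (m+1) → ℤ, ∏ j, G (z j)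
          = ∑' p : ℤ × (Fin m → ℤ), ∏ j, G ((Fin.cons p.1 p.2 : Fin (m+1) → ℤ) j) := by
            rw [← Equiv.tsum_eq (Fin.consEquiv (fun _ : Fin (m+1) => ℤ))
              (fun z => ∏ j, G (z j))]
            rfl
        _ = ∑' p : ℤ × (Fin m → ℤ), G p.1 * ∏ j, G (p.2 j) := by
            apply tsum_congr
            intro p
            rw [Fin.prod_univ_succ]
            simp
        _ = ∑' n : ℤ, ∑' w : Fin m → ℤ, G n * ∏ j, G (w j) :=
            ENNReal.tsum_prod (f := fun (n : ℤ) (w : Fin m → ℤ) => G n * ∏ j, G (w j))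
        _ = ∑' n : ℤ, G n * ∑' w : Fin m → ℤ, ∏ j, G (w j) := by
            exact tsum_congr fun n => ENNReal.tsum_mul_left
        _ = (∑' n : ℤ, G n) * ((∑' n : ℤ, G n) ^ m) := by rw [ENNReal.tsum_mul_right, ih]
        _ = (∑' n : ℤ, G n) ^ (m + 1) := by rw [pow_succ]; ring

lemma int_summable : Summable (fun n : ℤ => (1 + |(n:ℝ)|) ^ (-(3:ℝ)/2)) := by
  have hnat : Summable (fun n : ℕ => (1 + (n:ℝ)) ^ (-(3:ℝ)/2)) := by
    have h1 : Summable (fun n : ℕ => (((n:ℝ)) ^ ((3:ℝ)/2))⁻¹) :=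
      Real.summable_nat_rpow_inv.mpr (by norm_num)
    have h2 : Summable (fun n : ℕ => ((((n+1):ℕ):ℝ) ^ ((3:ℝ)/2))⁻¹) :=
      (summable_nat_add_iff 1).mpr h1
    apply h2.congr
    intro n
    push_cast
    rw [← Real.rpow_neg (by positivity), neg_div]
    rw [show ((n:ℝ) + 1) = (1 + (n:ℝ)) by ring]
  apply Summable.of_nat_of_neg
  · apply hnat.congr; intro n; norm_num
  · apply hnat.congr; intro n; norm_num
lemma tsum_G_ne_top :
    (∑' n : ℤ, ENNReal.ofReal ((1 + |(n:ℝ)|) ^ (-(3:ℝ)/2))) ≠ ⊤ := by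
  rw [← ENNReal.ofReal_tsum_of_nonneg (fun n => Real.rpow_nonneg (by positivity) _) int_summable]
  exact ENNReal.ofReal_ne_top
lemma eunorm_nonneg (d : ℕ) (x : Fin d → ℝ) : 0 ≤ eunorm d x := norm_nonneg _

lemma eunorm_sub_le (d : ℕ) (x y : Fin d → ℝ) :
    eunorm d (x - y) ≤ eunorm d x + eunorm d y := by
  unfold eunorm
  rw [show (WithLp.equiv 2 (Fin d → ℝ)).symm (x - y)
      = (WithLp.equiv 2 (Fin d → ℝ)).symm x - (WithLp.equiv 2 (Fin d → ℝ)).symm y from rfl]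
  exact norm_sub_le _ _

lemma eunorm_neg (d : ℕ) (x : Fin d → ℝ) : eunorm d (-x) = eunorm d x := by
  unfold eunorm
  rw [show (WithLp.equiv 2 (Fin d → ℝ)).symm (-x) = -(WithLp.equiv 2 (Fin d → ℝ)).symm x from rfl]
  exact norm_neg _

-- coordinate bound
lemma coord_le_eunorm (d : ℕ) (x : Fin d → ℝ) (j : Fin d) : |x j| ≤ eunorm d x := by
  unfold eunorm
  rw [EuclideanSpace.norm_eq]
  have h1 : |x j| = Real.sqrt (x j ^ 2) := (Real.sqrt_sq_eq_abs _).symm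
  rw [h1]
  apply Real.sqrt_le_sqrt
  have := Finset.single_le_sum (f := fun i => x i ^ 2) (fun i _ => sq_nonneg (x i))
    (Finset.mem_univ j)
  simpa [sq_abs] using this

-- inverse bound
lemma exists_opbound (d : ℕ) (A : Matrix (Fin d) (Fin d) ℝ) (hA : IsUnit A.det) :
    ∃ M : ℝ, 1 ≤ M ∧ ∀ v : Fin d → ℝ, eunorm d v ≤ M * eunorm d (A.mulVec v) := by
  set f := LinearMap.toContinuousLinearMap (Matrix.toEuclideanLin (A⁻¹)) with hf
  refine ⟨‖f‖ + 1, by linarith [norm_nonneg f], fun v => ?_⟩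
  have hv : (A⁻¹).mulVec (A.mulVec v) = v := by
    rw [Matrix.mulVec_mulVec, Matrix.nonsing_inv_mul A hA, Matrix.one_mulVec]
  have h2 : eunorm d ((A⁻¹).mulVec (A.mulVec v)) ≤ ‖f‖ * eunorm d (A.mulVec v) := by
    have h3 : (WithLp.equiv 2 (Fin d → ℝ)).symm ((A⁻¹).mulVec (A.mulVec v))
        = f ((WithLp.equiv 2 (Fin d → ℝ)).symm (A.mulVec v)) := by
      simp [hf, LinearMap.coe_toContinuousLinearMap', Matrix.toEuclideanLin_apply_piLp_toLp]
    unfold eunorm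
    rw [h3]
    exact f.le_opNorm _
  rw [hv] at h2
  have : ‖f‖ * eunorm d (A.mulVec v) ≤ (‖f‖ + 1) * eunorm d (A.mulVec v) :=
    mul_le_mul_of_nonneg_right (by linarith) (eunorm_nonneg _ _)
  linarith

lemma eunorm_add_le (d : ℕ) (x y : Fin d → ℝ) :
    eunorm d (x + y) ≤ eunorm d x + eunorm d y := by
  unfold eunorm
  rw [show (WithLp.equiv 2 (Fin d → ℝ)).symm (x + y)
      = (WithLp.equiv 2 (Fin d → ℝ)).symm x + (WithLp.equiv 2 (Fin d → ℝ)).symm y from rfl]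
  exact norm_add_le _ _

/-- The lattice embedding. -/
noncomputable def phi (d : ℕ) (A : Matrix (Fin d) (Fin d) ℝ) (z : Fin d → ℤ) : Fin d → ℝ :=
  A.mulVec fun j => (z j : ℝ)

lemma phi_sub (d : ℕ) (A : Matrix (Fin d) (Fin d) ℝ) (u v : Fin d → ℤ) :
    phi d A (u - v) = phi d A u - phi d A v := by
  unfold phi
  have h : (fun j => (((u - v) j : ℤ) : ℝ)) =
      ((fun j => ((u j : ℤ) : ℝ)) - (fun j => ((v j : ℤ) : ℝ))) := by
    funext j; simp
  rw [h, Matrix.mulVec_sub]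

lemma phi_add (d : ℕ) (A : Matrix (Fin d) (Fin d) ℝ) (u v : Fin d → ℤ) :
    phi d A (u + v) = phi d A u + phi d A v := by
  unfold phi
  have h : (fun j => (((u + v) j : ℤ) : ℝ)) =
      ((fun j => ((u j : ℤ) : ℝ)) + (fun j => ((v j : ℤ) : ℝ))) := by
    funext j; simp
  rw [h, Matrix.mulVec_add]

/-- The weight evaluated on lattice points. -/
noncomputable def HH (d : ℕ) (A : Matrix (Fin d) (Fin d) ℝ) (z : Fin d → ℤ) : ℝ :=
  W d (eunorm d (phi d A z))

lemma HH_nonneg (d : ℕ) (A : Matrix (Fin d) (Fin d) ℝ) (z : Fin d → ℤ) : 0 ≤ HH d A z :=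
  W_nonneg (eunorm_nonneg _ _)

lemma scrL_eq (d : ℕ) (A : Matrix (Fin d) (Fin d) ℝ) (u v : Fin d → ℤ) :
    scrL d 1 (phi d A u) (phi d A v) =
      HH d A u * HH d A (u - v) + HH d A v * HH d A (u - v) + HH d A u * HH d A v := by
  rw [scrL, ← phi_sub, wt_one_eq, wt_one_eq, wt_one_eq]
  rfl

/-- Triangle-based key inequality for `HH`. -/
lemma HH_L1 {d : ℕ} (hd : 1 ≤ d) (A : Matrix (Fin d) (Fin d) ℝ) {u v c : Fin d → ℤ}
    (hc : c = u + v) :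
    HH d A u * HH d A v ≤ 2 ^ (d:ℝ) * HH d A c * (HH d A u + HH d A v) := by
  apply W_L1 hd (eunorm_nonneg _ _) (eunorm_nonneg _ _) (eunorm_nonneg _ _)
  rw [hc, phi_add]
  exact eunorm_add_le _ _ _

lemma HH_L1' {d : ℕ} (hd : 1 ≤ d) (A : Matrix (Fin d) (Fin d) ℝ) {u v c : Fin d → ℤ}
    (hc : c = u - v) :
    HH d A u * HH d A v ≤ 2 ^ (d:ℝ) * HH d A c * (HH d A u + HH d A v) := by
  apply W_L1 hd (eunorm_nonneg _ _) (eunorm_nonneg _ _) (eunorm_nonneg _ _)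
  rw [hc, phi_sub]
  exact eunorm_sub_le _ _ _

lemma HH_neg (d : ℕ) (A : Matrix (Fin d) (Fin d) ℝ) (z : Fin d → ℤ) :
    HH d A (-z) = HH d A z := by
  unfold HH
  have h : phi d A (-z) = -(phi d A z) := by
    unfold phi
    have h2 : (fun j => (((-z) j : ℤ) : ℝ)) = -(fun j => ((z j : ℤ) : ℝ)) := by
      funext j; simp
    rw [h2, Matrix.mulVec_neg]
  rw [h, eunorm_neg]

set_option maxHeartbeats 1000000 in
lemma S_ne_top {d : ℕ} (hd : 1 ≤ d) (A : Matrix (Fin d) (Fin d) ℝ) (hA : IsUnit A.det) :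
    (∑' z : Fin d → ℤ, ENNReal.ofReal (HH d A z ^ 2)) ≠ ⊤ := by
  obtain ⟨M, hM, hbd⟩ := exists_opbound d A hA
  set K := 64 * Real.exp 1 ^ ((1:ℝ)/4) * M ^ ((3:ℝ)*(d:ℝ)/2) with hK
  have hK0 : 0 ≤ K := by positivity
  have hpt : ∀ z : Fin d → ℤ,
      HH d A z ^ 2 ≤ K * ∏ j, (1 + |((z j : ℤ):ℝ)|) ^ (-(3:ℝ)/2) := by
    intro z
    set r := eunorm d (phi d A z) with hr
    have hr0 : 0 ≤ r := eunorm_nonneg _ _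
    set a : Fin d → ℝ := fun j => 1 + |((z j : ℤ):ℝ)| with ha
    have ha1 : ∀ j, 1 ≤ a j := fun j => by
      simp only [ha]; linarith [abs_nonneg ((z j : ℤ):ℝ)]
    have ha2 : ∀ j, a j ≤ M * (1 + r) := by
      intro j
      have h5 := hbd (fun j => ((z j : ℤ):ℝ))
      have h6 : |((z j : ℤ):ℝ)| ≤ eunorm d (fun i => ((z i : ℤ):ℝ)) := by
        simpa using coord_le_eunorm d (fun i => ((z i : ℤ):ℝ)) j
      have h7 : eunorm d (A.mulVec fun j => ((z j : ℤ):ℝ)) = r := rfl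
      rw [h7] at h5
      simp only [ha]
      nlinarith [hr0]
    have hb := Wsq_bound hd hM hr0 a ha1 ha2
    have hprod : (∏ j, a j ^ ((3:ℝ)/2)) * (∏ j, a j ^ (-(3:ℝ)/2)) = 1 := by
      rw [← Finset.prod_mul_distrib]
      apply Finset.prod_eq_one
      intro j _
      rw [← Real.rpow_add (by linarith [ha1 j])]
      norm_num
    have hprodnn : 0 ≤ ∏ j, a j ^ (-(3:ℝ)/2) :=
      Finset.prod_nonneg fun j _ => Real.rpow_nonneg (by linarith [ha1 j]) _
    have step : HH d A z ^ 2 = (W d r ^ 2 * ∏ j, a j ^ ((3:ℝ)/2)) * ∏ j, a j ^ (-(3:ℝ)/2) := by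
      rw [mul_assoc, hprod, mul_one]
      rfl
    rw [step]
    exact mul_le_mul_of_nonneg_right hb hprodnn
  have bound : (∑' z : Fin d → ℤ, ENNReal.ofReal (HH d A z ^ 2)) ≤
      ENNReal.ofReal K *
        (∑' n : ℤ, ENNReal.ofReal ((1 + |(n:ℝ)|) ^ (-(3:ℝ)/2))) ^ d := by
    calc (∑' z : Fin d → ℤ, ENNReal.ofReal (HH d A z ^ 2))
        ≤ ∑' z : Fin d → ℤ,
            ENNReal.ofReal (K * ∏ j, (1 + |((z j : ℤ):ℝ)|) ^ (-(3:ℝ)/2)) :=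
          ENNReal.tsum_le_tsum fun z => ENNReal.ofReal_le_ofReal (hpt z)
      _ = ∑' z : Fin d → ℤ,
            ENNReal.ofReal K * ∏ j, ENNReal.ofReal ((1 + |((z j : ℤ):ℝ)|) ^ (-(3:ℝ)/2)) := by
          apply tsum_congr
          intro z
          rw [ENNReal.ofReal_mul hK0, ENNReal.ofReal_prod_of_nonneg
            (fun j _ => Real.rpow_nonneg (by positivity) _)]
      _ = ENNReal.ofReal K *
            (∑' n : ℤ, ENNReal.ofReal ((1 + |(n:ℝ)|) ^ (-(3:ℝ)/2))) ^ d := by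
          rw [ENNReal.tsum_mul_left,
            pi_tsum_prod d (fun n => ENNReal.ofReal ((1 + |(n:ℝ)|) ^ (-(3:ℝ)/2)))]
  exact ne_top_of_le_ne_top
    (ENNReal.mul_ne_top ENNReal.ofReal_ne_top (ENNReal.pow_ne_top tsum_G_ne_top)) bound

set_option maxHeartbeats 1000000 in
/-- Approximate submultiplicativity of the kernel `𝓛_1`:
`Σ_{ℓ ∈ Λ} 𝓛_1(m,ℓ) 𝓛_1(ℓ,n) ≤ C·𝓛_1(m,n)` uniformly in `m, n ∈ Λ`. -/
theorem scrL_submultiplicative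
    (d : ℕ) (A : Matrix (Fin d) (Fin d) ℝ) (hA : IsUnit A.det) :
    ∃ C : ℝ, 0 < C ∧ ∀ zm zn : Fin d → ℤ,
      (∑' z : Fin d → ℤ, ENNReal.ofReal
          (scrL d 1 (A.mulVec fun j => (zm j : ℝ)) (A.mulVec fun j => (z j : ℝ)) *
            scrL d 1 (A.mulVec fun j => (z j : ℝ)) (A.mulVec fun j => (zn j : ℝ))))
        ≤ ENNReal.ofReal
            (C * scrL d 1 (A.mulVec fun j => (zm j : ℝ)) (A.mulVec fun j => (zn j : ℝ))) := by
  rcases Nat.eq_zero_or_pos d with hd0 | hd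
  · -- degenerate case `d = 0`
    subst hd0
    have hsc : ∀ u v : Fin 0 → ℝ, scrL 0 1 u v = 3 := by
      intro u v
      have he : ∀ x : Fin 0 → ℝ, eunorm 0 x = 0 := by
        intro x
        unfold eunorm
        rw [Subsingleton.elim ((WithLp.equiv 2 (Fin 0 → ℝ)).symm x) 0, norm_zero]
      have hw : wt 1 (0:ℕ) 0 = 1 := by
        rw [wt]
        norm_num
      rw [scrL, he, he, he, hw]
      norm_num
    refine ⟨9, by norm_num, fun zm zn => ?_⟩
    have hT : ∀ f : (Fin 0 → ℤ) → ENNReal, (∑' z : Fin 0 → ℤ, f z) = f (fun i => i.elim0) := by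
      intro f
      apply tsum_eq_single
      intro b hb
      exact absurd (Subsingleton.elim b _) hb
    rw [hT]
    rw [hsc, hsc, hsc]
    exact ENNReal.ofReal_le_ofReal (by norm_num)
  · -- main case `1 ≤ d`
    have hS := S_ne_top hd A hA
    set Sv := ∑' z : Fin d → ℤ, ENNReal.ofReal (HH d A z ^ 2) with hSv
    set Sr := Sv.toReal with hSr
    have hSr0 : 0 ≤ Sr := ENNReal.toReal_nonneg
    set D := (2:ℝ) ^ (d:ℝ) with hDdef
    have hD1 : (1:ℝ) ≤ D := by
      rw [hDdef, show (1:ℝ) = 2 ^ (0:ℝ) by norm_num]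
      exact Real.rpow_le_rpow_of_exponent_le (by norm_num) (Nat.cast_nonneg d)
    refine ⟨36 * D ^ 2 * (3 * Sr + 1), by nlinarith, fun zm zn => ?_⟩
    show (∑' x : Fin d → ℤ, ENNReal.ofReal
          (scrL d 1 (phi d A zm) (phi d A x) * scrL d 1 (phi d A x) (phi d A zn)))
        ≤ ENNReal.ofReal
            (36 * D ^ 2 * (3 * Sr + 1) * scrL d 1 (phi d A zm) (phi d A zn))
    have hL0 : 0 ≤ scrL d 1 (phi d A zm) (phi d A zn) := by
      rw [scrL_eq]
      have n1 := HH_nonneg d A zm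
      have n2 := HH_nonneg d A zn
      have n3 := HH_nonneg d A (zm - zn)
      positivity
    have key : ∀ x : Fin d → ℤ,
        scrL d 1 (phi d A zm) (phi d A x) * scrL d 1 (phi d A x) (phi d A zn) ≤
          36 * D ^ 2 * (scrL d 1 (phi d A zm) (phi d A zn) *
            (HH d A x ^ 2 + HH d A (zm - x) ^ 2 + HH d A (x - zn) ^ 2)) := by
      intro x
      rw [scrL_eq, scrL_eq, scrL_eq]
      exact master hD1 (HH_nonneg d A zm) (HH_nonneg d A zn) (HH_nonneg d A (zm - zn))
        (HH_nonneg d A x) (HH_nonneg d A (zm - x)) (HH_nonneg d A (x - zn))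
        (HH_L1 hd A (by ring)) (HH_L1 hd A (by ring)) (HH_L1' hd A (by ring))
    have hcoef : 0 ≤ 36 * D ^ 2 * scrL d 1 (phi d A zm) (phi d A zn) := by positivity
    calc (∑' x : Fin d → ℤ, ENNReal.ofReal
          (scrL d 1 (phi d A zm) (phi d A x) * scrL d 1 (phi d A x) (phi d A zn)))
        ≤ ∑' x : Fin d → ℤ, ENNReal.ofReal
            (36 * D ^ 2 * (scrL d 1 (phi d A zm) (phi d A zn) *
              (HH d A x ^ 2 + HH d A (zm - x) ^ 2 + HH d A (x - zn) ^ 2))) :=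
          ENNReal.tsum_le_tsum fun x => ENNReal.ofReal_le_ofReal (key x)
      _ = ∑' x : Fin d → ℤ,
            ENNReal.ofReal (36 * D ^ 2 * scrL d 1 (phi d A zm) (phi d A zn)) *
              (ENNReal.ofReal (HH d A x ^ 2) + ENNReal.ofReal (HH d A (x - zm) ^ 2) +
                ENNReal.ofReal (HH d A (x - zn) ^ 2)) := by
          apply tsum_congr
          intro x
          rw [show HH d A (zm - x) = HH d A (x - zm) by
            rw [show zm - x = -(x - zm) by ring, HH_neg]]
          rw [show 36 * D ^ 2 * (scrL d 1 (phi d A zm) (phi d A zn) *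
              (HH d A x ^ 2 + HH d A (x - zm) ^ 2 + HH d A (x - zn) ^ 2)) =
            (36 * D ^ 2 * scrL d 1 (phi d A zm) (phi d A zn)) *
              (HH d A x ^ 2 + HH d A (x - zm) ^ 2 + HH d A (x - zn) ^ 2) by ring]
          rw [ENNReal.ofReal_mul hcoef, ENNReal.ofReal_add (by positivity) (by positivity),
            ENNReal.ofReal_add (by positivity) (by positivity)]
      _ = ENNReal.ofReal (36 * D ^ 2 * scrL d 1 (phi d A zm) (phi d A zn)) *
            (Sv + Sv + Sv) := by
          have e1 : (∑' x : Fin d → ℤ, ENNReal.ofReal (HH d A (x - zm) ^ 2)) = Sv := by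
            rw [hSv]
            simpa using Equiv.tsum_eq (Equiv.subRight zm)
              (fun y => ENNReal.ofReal (HH d A y ^ 2))
          have e2 : (∑' x : Fin d → ℤ, ENNReal.ofReal (HH d A (x - zn) ^ 2)) = Sv := by
            rw [hSv]
            simpa using Equiv.tsum_eq (Equiv.subRight zn)
              (fun y => ENNReal.ofReal (HH d A y ^ 2))
          rw [ENNReal.tsum_mul_left]
          congr 1
          rw [ENNReal.tsum_add, ENNReal.tsum_add, e1, e2, ← hSv]
      _ ≤ ENNReal.ofReal (36 * D ^ 2 * scrL d 1 (phi d A zm) (phi d A zn)) *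
            ENNReal.ofReal (3 * Sr + 1) := by
          apply mul_le_mul_right
          have hv : Sv = ENNReal.ofReal Sr := (ENNReal.ofReal_toReal hS).symm
          rw [hv, ← ENNReal.ofReal_add hSr0 hSr0, ← ENNReal.ofReal_add (by linarith) hSr0]
          exact ENNReal.ofReal_le_ofReal (by linarith)
      _ = ENNReal.ofReal (36 * D ^ 2 * (3 * Sr + 1) * scrL d 1 (phi d A zm) (phi d A zn)) := by
          rw [← ENNReal.ofReal_mul hcoef]
          congr 1
          ring
end

section
/- Neumann-series stability of decaying-kernel inverses: suppose (A_{mn})_{m,n∈Λ} is an operator on ℓ²(Λ;ℝ^m) whose matrix entries satisfy |A_{mn}| ≤ ε 𝓛(m,n) where 𝓛 is a nonnegative symmetric kernel satisfying Σ_{ℓ} 𝓛(m,ℓ)𝓛(ℓ,n) ≤ K 𝓛(m,n) for all m,n and Σ_{m,n} 𝓛(m,n)² < ∞. If ε K < 1 and ε m K < 1 where m is the blocks dimension, then I − A is invertible on ℓ² and the entries of (I−A)^{-1} − I satisfy |[(I−A)^{-1} − I]_{mn}| ≤ (ε / (1 − ε m K)) 𝓛(m,n). -/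
open scoped BigOperators

open scoped BigOperators ENNReal NNReal
set_option linter.unusedSectionVars false
set_option linter.unusedVariables false
set_option maxHeartbeats 1000000

namespace NeumannAux

variable {ι : Type*} [Countable ι] [DecidableEq ι] {μ : ℕ}

noncomputable def evalCLM (μ : ℕ) (n : ι) :
    lp (fun _ : ι => EuclideanSpace ℝ (Fin μ)) 2 →L[ℝ] EuclideanSpace ℝ (Fin μ) :=
  LinearMap.mkContinuous
    { toFun := fun f => f n
      map_add' := fun f g => by simp [lp.coeFn_add]
      map_smul' := fun c f => by simp [lp.coeFn_smul] }
    1 fun f => by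
      rw [one_mul]
      exact lp.norm_apply_le_norm two_ne_zero f n

@[simp] lemma evalCLM_apply (n : ι) (f : lp (fun _ : ι => EuclideanSpace ℝ (Fin μ)) 2) :
    evalCLM μ n f = f n := rfl

lemma hasSum_coord (T : lp (fun _ : ι => EuclideanSpace ℝ (Fin μ)) 2 →L[ℝ]
      lp (fun _ : ι => EuclideanSpace ℝ (Fin μ)) 2)
    (f : lp (fun _ : ι => EuclideanSpace ℝ (Fin μ)) 2) (n : ι) :
    HasSum (fun m : ι => (T (lp.single 2 m (f m)) : ∀ i : ι, EuclideanSpace ℝ (Fin μ)) n)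
      ((T f : ∀ i : ι, EuclideanSpace ℝ (Fin μ)) n) := by
  have h1 : HasSum (fun m : ι => lp.single 2 m (f m)) f :=
    lp.hasSum_single (by norm_num) f
  simpa using h1.mapL ((evalCLM μ n).comp T)

lemma norm_coord_le (T : lp (fun _ : ι => EuclideanSpace ℝ (Fin μ)) 2 →L[ℝ]
      lp (fun _ : ι => EuclideanSpace ℝ (Fin μ)) 2)
    (f : lp (fun _ : ι => EuclideanSpace ℝ (Fin μ)) 2) (n : ι) (g : ι → ℝ)
    (hg : Summable g)
    (hb : ∀ m, ‖(T (lp.single 2 m (f m)) : ∀ i : ι, EuclideanSpace ℝ (Fin μ)) n‖ ≤ g m) :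
    ‖(T f : ∀ i : ι, EuclideanSpace ℝ (Fin μ)) n‖ ≤ ∑' m, g m := by
  have h := hasSum_coord T f n
  have hsn : Summable fun m : ι =>
      ‖(T (lp.single 2 m (f m)) : ∀ i : ι, EuclideanSpace ℝ (Fin μ)) n‖ :=
    Summable.of_nonneg_of_le (fun m => norm_nonneg _) hb hg
  rw [← h.tsum_eq]
  exact (norm_tsum_le_tsum_norm hsn).trans (Summable.tsum_le_tsum hb hsn hg)

lemma cs (f : lp (fun _ : ι => EuclideanSpace ℝ (Fin μ)) 2) (u : ι → ℝ) (hu : ∀ m, 0 ≤ u m)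
    (husq : Summable fun m => u m ^ 2) :
    Summable (fun m => u m * ‖f m‖) ∧
      ∑' m, u m * ‖f m‖ ≤ Real.sqrt (∑' m, u m ^ 2) * ‖f‖ := by
  have hpt : (2 : ℝ≥0∞).toReal = 2 := by norm_num
  have hrp : ∀ x : ℝ, x ^ (2 : ℝ≥0∞).toReal = x ^ 2 := fun x => by
    rw [hpt, show (2 : ℝ) = ((2 : ℕ) : ℝ) by norm_num, Real.rpow_natCast]
  have h02 : 0 < (2 : ℝ≥0∞).toReal := by rw [hpt]; norm_num
  have hrp2 : ∀ x : ℝ, x ^ (2 : ℝ) = x ^ 2 := fun x => by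
    rw [show (2 : ℝ) = ((2 : ℕ) : ℝ) by norm_num, Real.rpow_natCast]
  have hconj : ((2 : ℝ≥0∞)).toReal.HolderConjugate (2 : ℝ≥0∞).toReal := by
    rw [hpt]; constructor <;> norm_num
  have hmemu : Memℓp u (2 : ℝ≥0∞) := memℓp_gen (by
    simpa [hrp, Real.norm_eq_abs, sq_abs] using husq)
  have hfs : Summable fun m => ‖f m‖ ^ (2 : ℝ≥0∞).toReal := (lp.memℓp f).summable h02
  have hmemf : Memℓp (fun m => ‖f m‖) (2 : ℝ≥0∞) := memℓp_gen (by
    simpa [norm_norm] using hfs)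
  set gu : lp (fun _ : ι => ℝ) 2 := ⟨u, hmemu⟩ with hgu_def
  set gf : lp (fun _ : ι => ℝ) 2 := ⟨fun m => ‖f m‖, hmemf⟩ with hgf_def
  have hgu : ∀ m, gu m = u m := fun m => rfl
  have hgf : ∀ m, gf m = ‖f m‖ := fun m => rfl
  have hngu : ‖gu‖ = Real.sqrt (∑' m, u m ^ 2) := by
    rw [lp.norm_eq_tsum_rpow h02 gu, Real.sqrt_eq_rpow, hpt]
    congr 1
    exact tsum_congr fun m => by rw [hgu, Real.norm_eq_abs, hrp2, sq_abs]
  have hngf : ‖gf‖ = ‖f‖ := by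
    rw [lp.norm_eq_tsum_rpow h02 gf, lp.norm_eq_tsum_rpow h02 f]
    congr 1
    exact tsum_congr fun m => by simp [hgf]
  obtain ⟨hsum, hle⟩ := lp.tsum_mul_le_mul_norm hconj gu gf
  have hterm : ∀ m, ‖gu m‖ * ‖gf m‖ = u m * ‖f m‖ := fun m => by
    simp [hgu, hgf, Real.norm_eq_abs, abs_of_nonneg (hu m)]
  constructor
  · exact hsum.congr hterm
  · calc ∑' m, u m * ‖f m‖ = ∑' m, ‖gu m‖ * ‖gf m‖ := (tsum_congr fun m => hterm m).symm
      _ ≤ ‖gu‖ * ‖gf‖ := hle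
      _ = _ := by rw [hngu, hngf]

lemma opnorm_le (L : ι → ι → ℝ) (hLnn : ∀ m n, 0 ≤ L m n)
    (hLsq : Summable fun q : ι × ι => (L q.1 q.2) ^ 2)
    (T : lp (fun _ : ι => EuclideanSpace ℝ (Fin μ)) 2 →L[ℝ]
      lp (fun _ : ι => EuclideanSpace ℝ (Fin μ)) 2)
    (c : ℝ) (hc : 0 ≤ c)
    (hT : ∀ m n v, ‖(T (lp.single 2 m v) : ∀ i : ι, EuclideanSpace ℝ (Fin μ)) n‖
      ≤ c * L m n * ‖v‖) :
    ‖T‖ ≤ c * Real.sqrt (∑' q : ι × ι, L q.1 q.2 ^ 2) := by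
  have hpt : (2 : ℝ≥0∞).toReal = 2 := by norm_num
  have h02 : 0 < (2 : ℝ≥0∞).toReal := by rw [hpt]; norm_num
  have hrp2 : ∀ x : ℝ, x ^ (2 : ℝ≥0∞).toReal = x ^ 2 := fun x => by
    rw [hpt, show (2 : ℝ) = ((2 : ℕ) : ℝ) by norm_num, Real.rpow_natCast]
  set S : ℝ := Real.sqrt (∑' q : ι × ι, L q.1 q.2 ^ 2) with hS
  have hSnn : 0 ≤ S := Real.sqrt_nonneg _
  apply ContinuousLinearMap.opNorm_le_bound _ (mul_nonneg hc hSnn)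
  intro f
  have hslice : ∀ n : ι, Summable fun m => L m n ^ 2 := fun n => by
    simpa [Function.comp_def] using
      hLsq.comp_injective (i := fun m => (m, n)) (fun a b hab => (Prod.ext_iff.1 hab).1)
  have hcoord : ∀ n : ι, ‖(T f : ∀ i : ι, EuclideanSpace ℝ (Fin μ)) n‖
      ≤ c * (Real.sqrt (∑' m, L m n ^ 2) * ‖f‖) := by
    intro n
    obtain ⟨hsum, hle⟩ := cs f (fun m => L m n) (fun m => hLnn m n) (hslice n)
    have := norm_coord_le T f n (fun m => c * (L m n * ‖f m‖)) (hsum.mul_left c)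
      (fun m => by
        calc ‖(T (lp.single 2 m (f m)) : ∀ i : ι, EuclideanSpace ℝ (Fin μ)) n‖
            ≤ c * L m n * ‖f m‖ := hT m n (f m)
          _ = c * (L m n * ‖f m‖) := by ring)
    refine this.trans ?_
    rw [tsum_mul_left]
    exact mul_le_mul_of_nonneg_left hle hc
  have hTfs : Summable fun n => ‖(T f : ∀ i : ι, EuclideanSpace ℝ (Fin μ)) n‖ ^ (2 : ℝ≥0∞).toReal :=
    (lp.memℓp (T f)).summable h02
  apply lp.norm_le_of_tsum_le h02 (by positivity)
  have hLsq' : Summable fun q : ι × ι => L q.2 q.1 ^ 2 := by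
    simpa [Function.comp_def] using hLsq.comp_injective (i := Prod.swap) Prod.swap_injective
  have hmaj : Summable fun n : ι => ∑' m, L m n ^ 2 := by
    simpa using hLsq'.prod
  have hstep : ∀ n : ι, ‖(T f : ∀ i : ι, EuclideanSpace ℝ (Fin μ)) n‖ ^ (2 : ℝ≥0∞).toReal
      ≤ (c ^ 2 * ‖f‖ ^ 2) * ∑' m, L m n ^ 2 := by
    intro n
    rw [hrp2]
    have h1 := hcoord n
    have h2 : ‖(T f : ∀ i : ι, EuclideanSpace ℝ (Fin μ)) n‖ ^ 2
        ≤ (c * (Real.sqrt (∑' m, L m n ^ 2) * ‖f‖)) ^ 2 := by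
      apply pow_le_pow_left₀ (norm_nonneg _) h1
    refine h2.trans_eq ?_
    have h3 : Real.sqrt (∑' m, L m n ^ 2) ^ 2 = ∑' m, L m n ^ 2 :=
      Real.sq_sqrt (tsum_nonneg fun m => sq_nonneg _)
    rw [mul_pow, mul_pow, h3]; ring
  calc ∑' n, ‖(T f : ∀ i : ι, EuclideanSpace ℝ (Fin μ)) n‖ ^ (2 : ℝ≥0∞).toReal
      ≤ ∑' n, (c ^ 2 * ‖f‖ ^ 2) * ∑' m, L m n ^ 2 :=
        Summable.tsum_le_tsum hstep hTfs (hmaj.mul_left _)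
    _ = (c ^ 2 * ‖f‖ ^ 2) * ∑' n, ∑' m, L m n ^ 2 := tsum_mul_left
    _ = (c * S * ‖f‖) ^ (2 : ℝ≥0∞).toReal := by
        rw [hrp2]
        have h1 : (∑' n : ι, ∑' m : ι, L m n ^ 2) = ∑' q : ι × ι, L q.2 q.1 ^ 2 :=
          (Summable.tsum_prod hLsq').symm
        have h2 : (∑' q : ι × ι, L q.2 q.1 ^ 2) = ∑' q : ι × ι, L q.1 q.2 ^ 2 := by
          simpa using (Equiv.prodComm ι ι).tsum_eq fun q : ι × ι => L q.1 q.2 ^ 2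
        have h3 : S ^ 2 = ∑' q : ι × ι, L q.1 q.2 ^ 2 :=
          Real.sq_sqrt (tsum_nonneg fun q => sq_nonneg _)
        rw [h1, h2, ← h3]; ring

lemma summable_LL (L : ι → ι → ℝ) (hLnn : ∀ m n, 0 ≤ L m n)
    (hLsq : Summable fun q : ι × ι => (L q.1 q.2) ^ 2) (m n : ι) :
    Summable fun ℓ => L m ℓ * L ℓ n := by
  have h1 : Summable fun ℓ => L m ℓ ^ 2 := by
    simpa [Function.comp_def] using
      hLsq.comp_injective (i := fun ℓ => (m, ℓ)) (fun a b hab => (Prod.ext_iff.1 hab).2)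
  have h2 : Summable fun ℓ => L ℓ n ^ 2 := by
    simpa [Function.comp_def] using
      hLsq.comp_injective (i := fun ℓ => (ℓ, n)) (fun a b hab => (Prod.ext_iff.1 hab).1)
  refine Summable.of_nonneg_of_le (fun ℓ => mul_nonneg (hLnn _ _) (hLnn _ _))
    (fun ℓ => ?_) ((h1.add h2).div_const 2)
  nlinarith [sq_nonneg (L m ℓ - L ℓ n)]

lemma entry_pow (L : ι → ι → ℝ) (ε K : ℝ) (hε : 0 ≤ ε) (hK : 0 ≤ K)
    (hLnn : ∀ m n, 0 ≤ L m n)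
    (hLsq : Summable fun q : ι × ι => (L q.1 q.2) ^ 2)
    (hLmul : ∀ m n, ∑' ℓ, L m ℓ * L ℓ n ≤ K * L m n)
    (A : lp (fun _ : ι => EuclideanSpace ℝ (Fin μ)) 2 →L[ℝ]
      lp (fun _ : ι => EuclideanSpace ℝ (Fin μ)) 2)
    (hentry : ∀ (m n : ι) (v : EuclideanSpace ℝ (Fin μ)),
      ‖(A (lp.single 2 m v) : ∀ i : ι, EuclideanSpace ℝ (Fin μ)) n‖ ≤ ε * L m n * ‖v‖)
    (k : ℕ) :
    ∀ (m n : ι) (v : EuclideanSpace ℝ (Fin μ)),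
      ‖((A ^ (k + 1)) (lp.single 2 m v) : ∀ i : ι, EuclideanSpace ℝ (Fin μ)) n‖
        ≤ ε * (ε * K) ^ k * L m n * ‖v‖ := by
  induction k with
  | zero => intro m n v; simpa using hentry m n v
  | succ k ih =>
    intro m n v
    set c : ℝ := ε * (ε * K) ^ k with hc_def
    have hc : 0 ≤ c := mul_nonneg hε (pow_nonneg (mul_nonneg hε hK) k)
    set f := A (lp.single 2 m v) with hf
    have hAB : ((A ^ (k + 1 + 1)) (lp.single 2 m v) : ∀ i : ι, EuclideanSpace ℝ (Fin μ)) n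
        = ((A ^ (k + 1)) f : ∀ i : ι, EuclideanSpace ℝ (Fin μ)) n := by
      rw [pow_succ]; rfl
    rw [hAB]
    have hLL : Summable fun ℓ => L m ℓ * L ℓ n := summable_LL L hLnn hLsq m n
    have hb : ∀ ℓ, ‖((A ^ (k + 1)) (lp.single 2 ℓ (f ℓ)) : ∀ i : ι, EuclideanSpace ℝ (Fin μ)) n‖
        ≤ (c * ε * ‖v‖) * (L m ℓ * L ℓ n) := by
      intro ℓ
      have h2 : ‖f ℓ‖ ≤ ε * L m ℓ * ‖v‖ := hentry m ℓ v
      calc ‖((A ^ (k + 1)) (lp.single 2 ℓ (f ℓ)) : ∀ i : ι, EuclideanSpace ℝ (Fin μ)) n‖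
          ≤ c * L ℓ n * ‖f ℓ‖ := ih ℓ n (f ℓ)
        _ ≤ c * L ℓ n * (ε * L m ℓ * ‖v‖) :=
            mul_le_mul_of_nonneg_left h2 (mul_nonneg hc (hLnn ℓ n))
        _ = (c * ε * ‖v‖) * (L m ℓ * L ℓ n) := by ring
    have hmain := norm_coord_le (A ^ (k + 1)) f n _ (hLL.mul_left (c * ε * ‖v‖)) hb
    refine hmain.trans ?_
    rw [tsum_mul_left]
    have h4 : (∑' ℓ, L m ℓ * L ℓ n) ≤ K * L m n := hLmul m n
    calc (c * ε * ‖v‖) * ∑' ℓ, L m ℓ * L ℓ n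
        ≤ (c * ε * ‖v‖) * (K * L m n) :=
          mul_le_mul_of_nonneg_left h4
            (mul_nonneg (mul_nonneg hc hε) (norm_nonneg v))
      _ = ε * (ε * K) ^ (k + 1) * L m n * ‖v‖ := by rw [hc_def]; ring

end NeumannAux


/-- Neumann-series stability of decaying-kernel inverses on `ℓ²(Λ; ℝ^m)`:
if the block entries of `A` satisfy `|A_{mn}| ≤ ε·𝓛(m,n)` for a symmetric nonnegative
kernel `𝓛` that is square-summable and approximately submultiplicative with constant `K`,
and `εK < 1`, `εmK < 1`, then `I − A` is invertible and
`|[(I−A)^{-1} − I]_{mn}| ≤ (ε/(1−εmK))·𝓛(m,n)`. -/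
theorem neumann_decay_inverse
    {ι : Type*} [Countable ι] [DecidableEq ι] (μ : ℕ)
    (Aop : lp (fun _ : ι => EuclideanSpace ℝ (Fin μ)) 2 →L[ℝ]
           lp (fun _ : ι => EuclideanSpace ℝ (Fin μ)) 2)
    (L : ι → ι → ℝ) (ε K : ℝ) (hε : 0 ≤ ε) (hK : 0 ≤ K)
    (hLnn : ∀ m n, 0 ≤ L m n) (hLsymm : ∀ m n, L m n = L n m)
    (hLmul : ∀ m n, ∑' ℓ, L m ℓ * L ℓ n ≤ K * L m n)
    (hLsq : Summable fun q : ι × ι => (L q.1 q.2) ^ 2)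
    (hentry : ∀ (m n : ι) (v : EuclideanSpace ℝ (Fin μ)),
      ‖(Aop (lp.single 2 m v) : ∀ i : ι, EuclideanSpace ℝ (Fin μ)) n‖ ≤ ε * L m n * ‖v‖)
    (h1 : ε * K < 1) (h2 : ε * μ * K < 1) :
    IsUnit (1 - Aop) ∧
    ∀ (m n : ι) (v : EuclideanSpace ℝ (Fin μ)),
      ‖((Ring.inverse (1 - Aop) - 1) (lp.single 2 m v) : ∀ i : ι, EuclideanSpace ℝ (Fin μ)) n‖
        ≤ (ε / (1 - ε * μ * K)) * L m n * ‖v‖ := by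
  classical
  set S : ℝ := Real.sqrt (∑' q : ι × ι, L q.1 q.2 ^ 2) with hS
  have hεK : 0 ≤ ε * K := mul_nonneg hε hK
  have hpowentry := NeumannAux.entry_pow L ε K hε hK hLnn hLsq hLmul Aop hentry
  have hopn : ∀ k : ℕ, ‖Aop ^ (k + 1)‖ ≤ (ε * S) * (ε * K) ^ k := fun k => by
    have h := NeumannAux.opnorm_le L hLnn hLsq (Aop ^ (k + 1)) (ε * (ε * K) ^ k)
      (mul_nonneg hε (pow_nonneg hεK k)) (hpowentry k)
    calc ‖Aop ^ (k + 1)‖ ≤ ε * (ε * K) ^ k * S := h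
      _ = (ε * S) * (ε * K) ^ k := by ring
  have hgeom : Summable fun k : ℕ => (ε * S) * (ε * K) ^ k :=
    (summable_geometric_of_lt_one hεK h1).mul_left _
  have hsum : Summable fun k : ℕ => Aop ^ (k + 1) :=
    Summable.of_norm_bounded hgeom hopn
  set B := ∑' k : ℕ, Aop ^ (k + 1) with hB
  have hshift : ∑' k : ℕ, Aop ^ (k + 1 + 1) = B - Aop := by
    have h := Summable.tsum_eq_zero_add hsum
    rw [← hB] at h
    rw [h]
    simp [pow_one]
  have hABl : Aop * B = B - Aop := by
    have h : Aop * B = ∑' k : ℕ, Aop ^ (k + 1 + 1) := by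
      rw [hB, ← hsum.tsum_mul_left]
      exact tsum_congr fun k => (pow_succ' Aop (k + 1)).symm
    rw [h, hshift]
  have hABr : B * Aop = B - Aop := by
    have h : B * Aop = ∑' k : ℕ, Aop ^ (k + 1 + 1) := by
      rw [hB, ← hsum.tsum_mul_right]
      exact tsum_congr fun k => (pow_succ Aop (k + 1)).symm
    rw [h, hshift]
  have hunit1 : (1 - Aop) * (1 + B) = 1 := by
    have h : (1 - Aop) * (1 + B) = 1 + B - Aop - Aop * B := by noncomm_ring
    rw [h, hABl]; abel
  have hunit2 : (1 + B) * (1 - Aop) = 1 := by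
    have h : (1 + B) * (1 - Aop) = 1 + B - Aop - B * Aop := by noncomm_ring
    rw [h, hABr]; abel
  have hu : IsUnit (1 - Aop) := ⟨⟨1 - Aop, 1 + B, hunit1, hunit2⟩, rfl⟩
  refine ⟨hu, ?_⟩
  have hinv : Ring.inverse (1 - Aop) = 1 + B := by
    have := Ring.inverse_unit (⟨1 - Aop, 1 + B, hunit1, hunit2⟩ :
      (lp (fun _ : ι => EuclideanSpace ℝ (Fin μ)) 2 →L[ℝ]
        lp (fun _ : ι => EuclideanSpace ℝ (Fin μ)) 2)ˣ)
    exact this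
  have hop : Ring.inverse (1 - Aop) - 1 = B := by rw [hinv]; abel
  intro m n v
  rw [hop]
  rcases Nat.eq_zero_or_pos μ with hμ | hμ
  · subst hμ
    rw [Subsingleton.elim ((B (lp.single 2 m v) : ∀ i : ι, EuclideanSpace ℝ (Fin 0)) n) 0,
      Subsingleton.elim v 0]
    simp
  · -- coordinatewise geometric bound
    have hBv : HasSum (fun k : ℕ => (Aop ^ (k + 1)) (lp.single 2 m v)) (B (lp.single 2 m v)) := by
      simpa using hsum.hasSum.mapL
        (ContinuousLinearMap.apply ℝ (lp (fun _ : ι => EuclideanSpace ℝ (Fin μ)) 2)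
          (lp.single 2 m v))
    have hBvn : HasSum
        (fun k : ℕ => ((Aop ^ (k + 1)) (lp.single 2 m v) : ∀ i : ι, EuclideanSpace ℝ (Fin μ)) n)
        ((B (lp.single 2 m v) : ∀ i : ι, EuclideanSpace ℝ (Fin μ)) n) := by
      simpa using hBv.mapL (NeumannAux.evalCLM μ n)
    have hbound : ∀ k : ℕ,
        ‖((Aop ^ (k + 1)) (lp.single 2 m v) : ∀ i : ι, EuclideanSpace ℝ (Fin μ)) n‖
          ≤ (ε * L m n * ‖v‖) * (ε * K) ^ k := fun k => by
      calc ‖((Aop ^ (k + 1)) (lp.single 2 m v) : ∀ i : ι, EuclideanSpace ℝ (Fin μ)) n‖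
          ≤ ε * (ε * K) ^ k * L m n * ‖v‖ := hpowentry k m n v
        _ = (ε * L m n * ‖v‖) * (ε * K) ^ k := by ring
    have hgs : Summable fun k : ℕ => (ε * L m n * ‖v‖) * (ε * K) ^ k :=
      (summable_geometric_of_lt_one hεK h1).mul_left _
    have hns : Summable fun k : ℕ =>
        ‖((Aop ^ (k + 1)) (lp.single 2 m v) : ∀ i : ι, EuclideanSpace ℝ (Fin μ)) n‖ :=
      Summable.of_nonneg_of_le (fun _ => norm_nonneg _) hbound hgs
    have h5 : ‖((B (lp.single 2 m v)) : ∀ i : ι, EuclideanSpace ℝ (Fin μ)) n‖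
        ≤ (ε * L m n * ‖v‖) * (1 - ε * K)⁻¹ := by
      rw [← hBvn.tsum_eq]
      refine ((norm_tsum_le_tsum_norm hns).trans (Summable.tsum_le_tsum hbound hns hgs)).trans_eq ?_
      rw [tsum_mul_left, tsum_geometric_of_lt_one hεK h1]
    refine h5.trans ?_
    have hμ1 : (1 : ℝ) ≤ (μ : ℝ) := by exact_mod_cast hμ
    have hc1 : 0 < 1 - ε * K := by linarith
    have hc2 : 0 < 1 - ε * (μ : ℝ) * K := by linarith
    have hmono : ε * K ≤ ε * (μ : ℝ) * K := by nlinarith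
    have hle : (1 - ε * K)⁻¹ ≤ (1 - ε * (μ : ℝ) * K)⁻¹ := by
      rw [inv_eq_one_div, inv_eq_one_div]
      exact one_div_le_one_div_of_le hc2 (by linarith)
    calc (ε * L m n * ‖v‖) * (1 - ε * K)⁻¹
        ≤ (ε * L m n * ‖v‖) * (1 - ε * (μ : ℝ) * K)⁻¹ :=
          mul_le_mul_of_nonneg_left hle
            (mul_nonneg (mul_nonneg hε (hLnn m n)) (norm_nonneg v))
      _ = (ε / (1 - ε * (μ : ℝ) * K)) * L m n * ‖v‖ := by
          rw [div_eq_mul_inv]; ring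
end

section
/- Let H : X → X* be a bounded symmetric operator on a Hilbert space X with c₀ ‖v‖² ≤ ⟨Hv,v⟩ ≤ c₁ ‖v‖² for constants 0 < c₀ ≤ c₁, and let F : Y → X be a bounded linear operator from a Hilbert space Y with F* H F = I_Y. Then for any bounded symmetric H' : X → X* with c₀‖v‖² ≤ ⟨H'v,v⟩ ≤ c₁‖v‖², the operator F* H' F on Y is self-adjoint with spectrum contained in [c₀/c₁, c₁/c₀]. -/
open scoped RealInnerProductSpace

/-- If `H` satisfies `c₀‖v‖² ≤ ⟨Hv,v⟩ ≤ c₁‖v‖²`, `F*HF = I`, and `H'` satisfies the same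
two-sided bounds, then `F*H'F` is self-adjoint with spectrum in `[c₀/c₁, c₁/c₀]`. -/
theorem spectrum_FHF
    {X Y : Type*} [NormedAddCommGroup X] [InnerProductSpace ℝ X] [CompleteSpace X]
    [NormedAddCommGroup Y] [InnerProductSpace ℝ Y] [CompleteSpace Y]
    (H H' : X →L[ℝ] X) (F : Y →L[ℝ] X) (c₀ c₁ : ℝ) (hc₀ : 0 < c₀) (hc : c₀ ≤ c₁)
    (hH : IsSelfAdjoint H) (hH' : IsSelfAdjoint H')
    (hHb : ∀ v : X, c₀ * ‖v‖ ^ 2 ≤ ⟪H v, v⟫ ∧ ⟪H v, v⟫ ≤ c₁ * ‖v‖ ^ 2)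
    (hH'b : ∀ v : X, c₀ * ‖v‖ ^ 2 ≤ ⟪H' v, v⟫ ∧ ⟪H' v, v⟫ ≤ c₁ * ‖v‖ ^ 2)
    (hFHF : (ContinuousLinearMap.adjoint F) ∘L H ∘L F = 1) :
    IsSelfAdjoint ((ContinuousLinearMap.adjoint F) ∘L H' ∘L F) ∧
    spectrum ℝ ((ContinuousLinearMap.adjoint F) ∘L H' ∘L F) ⊆ Set.Icc (c₀ / c₁) (c₁ / c₀) := by
  have hc₁ : 0 < c₁ := lt_of_lt_of_le hc₀ hc
  set T := (ContinuousLinearMap.adjoint F) ∘L H' ∘L F with hT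
  have hsa : IsSelfAdjoint T := by
    rw [IsSelfAdjoint, ContinuousLinearMap.star_eq_adjoint, hT,
      ← ContinuousLinearMap.comp_assoc, ContinuousLinearMap.adjoint_comp,
      ContinuousLinearMap.adjoint_comp, ContinuousLinearMap.adjoint_adjoint,
      hH'.adjoint_eq, ContinuousLinearMap.comp_assoc]
  -- norm equivalence from F*HF = 1
  have hnorm : ∀ w : Y, c₀ * ‖F w‖ ^ 2 ≤ ‖w‖ ^ 2 ∧ ‖w‖ ^ 2 ≤ c₁ * ‖F w‖ ^ 2 := by
    intro w
    have h1 : ⟪H (F w), F w⟫ = ‖w‖ ^ 2 := by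
      have := congrArg (fun A : Y →L[ℝ] Y => ⟪A w, w⟫) hFHF
      simpa [ContinuousLinearMap.adjoint_inner_left, real_inner_self_eq_norm_sq] using this
    constructor
    · rw [← h1]; exact (hHb (F w)).1
    · rw [← h1]; exact (hHb (F w)).2
  -- two-sided bound for T
  have hTb : ∀ w : Y, c₀ / c₁ * ‖w‖ ^ 2 ≤ ⟪T w, w⟫ ∧ ⟪T w, w⟫ ≤ c₁ / c₀ * ‖w‖ ^ 2 := by
    intro w
    have hTw : ⟪T w, w⟫ = ⟪H' (F w), F w⟫ := by
      simp [hT, ContinuousLinearMap.adjoint_inner_left]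
    obtain ⟨hl, hu⟩ := hnorm w
    obtain ⟨hl', hu'⟩ := hH'b (F w)
    constructor
    · rw [hTw]
      calc c₀ / c₁ * ‖w‖ ^ 2 ≤ c₀ / c₁ * (c₁ * ‖F w‖ ^ 2) := by
            apply mul_le_mul_of_nonneg_left hu (by positivity)
        _ = c₀ * ‖F w‖ ^ 2 := by field_simp
        _ ≤ ⟪H' (F w), F w⟫ := hl'
    · rw [hTw]
      calc ⟪H' (F w), F w⟫ ≤ c₁ * ‖F w‖ ^ 2 := hu'
        _ = c₁ / c₀ * (c₀ * ‖F w‖ ^ 2) := by field_simp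
        _ ≤ c₁ / c₀ * ‖w‖ ^ 2 := by
            apply mul_le_mul_of_nonneg_left hl (by positivity)
  refine ⟨hsa, ?_⟩
  intro μ hμ
  by_contra hμ'
  rw [Set.mem_Icc, not_and_or, not_le, not_le] at hμ'
  -- show μ is not in the spectrum
  have hinner : ∀ w : Y, ⟪(algebraMap ℝ (Y →L[ℝ] Y) μ - T) w, w⟫
      = μ * ‖w‖ ^ 2 - ⟪T w, w⟫ := by
    intro w
    rw [ContinuousLinearMap.sub_apply, inner_sub_left, Algebra.algebraMap_eq_smul_one,
      ContinuousLinearMap.smul_apply, ContinuousLinearMap.one_apply,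
      real_inner_smul_left, real_inner_self_eq_norm_sq]
  have key : ∃ c : ℝ, 0 < c ∧ ∀ w : Y, ‖w‖ ^ 2 * c ≤ ‖⟪(algebraMap ℝ (Y →L[ℝ] Y) μ - T) w, w⟫‖ := by
    rcases hμ' with h | h
    · refine ⟨c₀ / c₁ - μ, by linarith, fun w => ?_⟩
      rw [hinner w, Real.norm_eq_abs]
      have := (hTb w).1
      have hsq : (0:ℝ) ≤ ‖w‖ ^ 2 := by positivity
      rw [le_abs]
      right
      nlinarith
    · refine ⟨μ - c₁ / c₀, by linarith, fun w => ?_⟩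
      rw [hinner w, Real.norm_eq_abs]
      have := (hTb w).2
      have hsq : (0:ℝ) ≤ ‖w‖ ^ 2 := by positivity
      rw [le_abs]
      left
      nlinarith
  obtain ⟨c, hcpos, hcle⟩ := key
  have : IsUnit (algebraMap ℝ (Y →L[ℝ] Y) μ - T) := by
    refine ContinuousLinearMap.isUnit_of_forall_le_norm_inner_map _ (c := ⟨c, hcpos.le⟩)
      (by exact_mod_cast hcpos) fun w => ?_
    exact_mod_cast hcle w
  rw [spectrum.mem_iff] at hμ
  exact hμ this
end

section
/- Weak lower semicontinuity with a rank-one negative part: let X be a Hilbert space continuously embedded in a Hilbert space L (e.g. Ẇ^{1,2} ⊂ ℓ² dual pairing), H : X → X* bounded symmetric, and suppose there exist λ̄ < 0 and φ̄ ∈ L ∩ X* with ⟨Hv, v⟩ ≥ λ̄ (v, φ̄)_L² / (φ̄, φ̄)_L for all v ∈ X. Then the quadratic form v ↦ ⟨Hv, v⟩ is sequentially weakly lower semicontinuous on X. -/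
open scoped RealInnerProductSpace

/-- Weak lower semicontinuity of a quadratic form with a rank-one negative part:
if `⟨Hv,v⟩ ≥ λ̄·(v,φ̄)_L²/(φ̄,φ̄)_L` with `λ̄ < 0` and the pairing `v ↦ (ιv, φ̄)_L`
is continuous on `X`, then `v ↦ ⟨Hv,v⟩` is sequentially weakly lower semicontinuous. -/
theorem quadratic_form_weak_lsc
    {X L : Type*} [NormedAddCommGroup X] [InnerProductSpace ℝ X] [CompleteSpace X]
    [NormedAddCommGroup L] [InnerProductSpace ℝ L] [CompleteSpace L]
    (ι : X →ₗ[ℝ] L) (H : X →L[ℝ] X) (hH : IsSelfAdjoint H)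
    (φ : L) (hφ : φ ≠ 0) (lam : ℝ) (hlam : lam < 0)
    (g : X →L[ℝ] ℝ) (hg : ∀ v : X, g v = ⟪ι v, φ⟫)
    (hlb : ∀ v : X, lam * ⟪ι v, φ⟫ ^ 2 / ⟪φ, φ⟫ ≤ ⟪H v, v⟫) :
    ∀ (ψ : ℕ → X) (ψ0 : X),
      (∀ f : X →L[ℝ] ℝ, Filter.Tendsto (fun j => f (ψ j)) Filter.atTop (nhds (f ψ0))) →
      ⟪H ψ0, ψ0⟫ ≤ Filter.liminf (fun j => ⟪H (ψ j), ψ j⟫) Filter.atTop := by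
  intro ψ ψ0 hweak
  have hsym := hH.isSymmetric
  -- auxiliary sequence
  set a : ℕ → ℝ := fun j =>
    2 * ⟪H ψ0, ψ j⟫ - ⟪H ψ0, ψ0⟫ + lam * (g ψ0 - g (ψ j)) ^ 2 / ⟪φ, φ⟫ with ha
  -- a j ≤ ⟪H ψj, ψj⟫
  have hle : ∀ j, a j ≤ ⟪H (ψ j), ψ j⟫ := by
    intro j
    have h1 := hlb (ψ0 - ψ j)
    have hmap : (ι (ψ0 - ψ j)) = ι ψ0 - ι (ψ j) := by simp
    have hpair : ⟪ι (ψ0 - ψ j), φ⟫ = g ψ0 - g (ψ j) := by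
      rw [hmap, inner_sub_left, hg, hg]
    rw [hpair] at h1
    have hexp : ⟪H (ψ0 - ψ j), ψ0 - ψ j⟫
        = ⟪H ψ0, ψ0⟫ - 2 * ⟪H ψ0, ψ j⟫ + ⟪H (ψ j), ψ j⟫ := by
      have hswap : ⟪H (ψ j), ψ0⟫ = ⟪H ψ0, ψ j⟫ := by
        have h := hsym (ψ j) ψ0
        simp only [ContinuousLinearMap.coe_coe] at h
        rw [h, real_inner_comm]
      simp only [map_sub, inner_sub_left, inner_sub_right, hswap]
      ring
    rw [hexp] at h1
    simp only [ha]
    linarith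
  -- a tends to ⟪H ψ0, ψ0⟫
  have h2 : Filter.Tendsto (fun j => ⟪H ψ0, ψ j⟫) Filter.atTop (nhds ⟪H ψ0, ψ0⟫) := by
    have := hweak (innerSL ℝ (H ψ0))
    simpa using this
  have h3 : Filter.Tendsto (fun j => g (ψ j)) Filter.atTop (nhds (g ψ0)) := hweak g
  have hta : Filter.Tendsto a Filter.atTop (nhds ⟪H ψ0, ψ0⟫) := by
    have : Filter.Tendsto a Filter.atTop
        (nhds (2 * ⟪H ψ0, ψ0⟫ - ⟪H ψ0, ψ0⟫ + lam * (g ψ0 - g ψ0) ^ 2 / ⟪φ, φ⟫)) := by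
      apply Filter.Tendsto.add
      · exact ((h2.const_mul 2).sub tendsto_const_nhds)
      · exact ((((tendsto_const_nhds.sub h3).pow 2).const_mul lam).div_const _)
    rwa [show 2 * (⟪H ψ0, ψ0⟫ : ℝ) - ⟪H ψ0, ψ0⟫ + lam * (g ψ0 - g ψ0) ^ 2 / ⟪φ, φ⟫
        = ⟪H ψ0, ψ0⟫ from by ring] at this
  calc ⟪H ψ0, ψ0⟫ = Filter.liminf a Filter.atTop := (hta.liminf_eq).symm
    _ ≤ Filter.liminf (fun j => ⟪H (ψ j), ψ j⟫) Filter.atTop := by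
        -- weakly convergent sequences are bounded (Banach–Steinhaus)
        obtain ⟨C, hC⟩ : ∃ C, ∀ j, ‖innerSL ℝ (ψ j)‖ ≤ C := by
          apply banach_steinhaus
          intro x
          have hx : Filter.Tendsto (fun j => (innerSL ℝ x) (ψ j)) Filter.atTop
              (nhds ((innerSL ℝ x) ψ0)) := hweak (innerSL ℝ x)
          have hb : BddAbove (Set.range fun j => ‖(innerSL ℝ x) (ψ j)‖) :=
            hx.norm.bddAbove_range
          obtain ⟨C, hC⟩ := hb
          refine ⟨C, fun j => ?_⟩
          have : ‖(innerSL ℝ (ψ j)) x‖ = ‖(innerSL ℝ x) (ψ j)‖ := by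
            simp [real_inner_comm]
          rw [this]
          exact hC (Set.mem_range_self j)
        have hnorm : ∀ j, ‖ψ j‖ ≤ C := by
          intro j
          have := hC j
          rwa [innerSL_apply_norm] at this
        have hqbd : ∀ j, ⟪H (ψ j), ψ j⟫ ≤ ‖H‖ * C * C := by
          intro j
          have h1 : ⟪H (ψ j), ψ j⟫ ≤ ‖H (ψ j)‖ * ‖ψ j‖ := real_inner_le_norm _ _
          have h2 : ‖H (ψ j)‖ ≤ ‖H‖ * ‖ψ j‖ := H.le_opNorm _
          have h0 : (0:ℝ) ≤ ‖ψ j‖ := norm_nonneg _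
          have hC0 : (0:ℝ) ≤ C := le_trans h0 (hnorm j)
          calc ⟪H (ψ j), ψ j⟫ ≤ ‖H (ψ j)‖ * ‖ψ j‖ := h1
            _ ≤ (‖H‖ * ‖ψ j‖) * ‖ψ j‖ := by
                exact mul_le_mul_of_nonneg_right h2 h0
            _ ≤ (‖H‖ * C) * C := by
                have hH0 : (0:ℝ) ≤ ‖H‖ := norm_nonneg _
                have hsq : ‖ψ j‖ * ‖ψ j‖ ≤ C * C :=
                  mul_le_mul (hnorm j) (hnorm j) h0 hC0
                calc ‖H‖ * ‖ψ j‖ * ‖ψ j‖ = ‖H‖ * (‖ψ j‖ * ‖ψ j‖) := by ring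
                  _ ≤ ‖H‖ * (C * C) := mul_le_mul_of_nonneg_left hsq hH0
                  _ = ‖H‖ * C * C := by ring
            _ = ‖H‖ * C * C := rfl
        exact Filter.liminf_le_liminf (Filter.Eventually.of_forall hle)
          hta.isBoundedUnder_ge
          (Filter.isCoboundedUnder_ge_of_eventually_le _
            (Filter.Eventually.of_forall hqbd))
end

section
/- Trace–log telescoping identity in finite dimensions: let H, H₀ be symmetric positive semidefinite n×n real matrices whose kernels both equal a common subspace K, and let π be the orthogonal projection onto K. Suppose F is a symmetric matrix with Fπ = πF = 0 and F H₀ F + π = I. Then log det⁺ H − log det⁺ H₀ = log det(F H F + π), where det⁺ denotes the product of positive eigenvalues. -/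
open scoped BigOperators

/-- The product of the positive eigenvalues (with multiplicity) of a Hermitian real
matrix. -/
noncomputable def detPlus {n : ℕ} (A : Matrix (Fin n) (Fin n) ℝ) (hA : A.IsHermitian) : ℝ :=
  ∏ i ∈ Finset.univ.filter (fun i => 0 < hA.eigenvalues i), hA.eigenvalues i

open Matrix

lemma det_add_proj {n:ℕ} (H P : Matrix (Fin n) (Fin n) ℝ) (hH : H.IsHermitian)
    (hpsd : H.PosSemidef) (hPH : P * H = 0)
    (hPid : ∀ x : Fin n → ℝ, H.mulVec x = 0 → P.mulVec x = x) :
    (H + P).det = detPlus H hH ∧ 0 < (H + P).det := by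
  set U : Matrix (Fin n) (Fin n) ℝ := (hH.eigenvectorUnitary : Matrix (Fin n) (Fin n) ℝ) with hUdef
  have hU1 : star U * U = 1 := Unitary.coe_star_mul_self _
  have hU2 : U * star U = 1 := Unitary.coe_mul_star_self _
  have hdiag : star U * H * U = Matrix.diagonal hH.eigenvalues := by
    have := hH.conjStarAlgAut_star_eigenvectorUnitary
    simpa [RCLike.ofReal_real_eq_id, Unitary.conjStarAlgAut_apply] using this
  have hHU : H * U = U * Matrix.diagonal hH.eigenvalues := by
    calc H * U = (U * star U) * H * U := by rw [hU2, one_mul]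
    _ = U * (star U * H * U) := by rw [Matrix.mul_assoc, Matrix.mul_assoc, ← Matrix.mul_assoc (star U) H U]
    _ = U * Matrix.diagonal hH.eigenvalues := by rw [hdiag]
  set ind : Fin n → ℝ := fun i => if hH.eigenvalues i = 0 then 1 else 0 with hinddef
  have hPU : P * U = U * Matrix.diagonal ind := by
    ext i j
    have hcol : H.mulVec (fun k => U k j) = hH.eigenvalues j • (fun k => U k j) := by
      funext i
      have h := congrFun (congrFun hHU i) j
      rw [Matrix.mul_diagonal] at h
      simpa [Matrix.mulVec, dotProduct, Matrix.mul_apply, mul_comm] using h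
    have lhs_eq : (P * U) i j = P.mulVec (fun k => U k j) i := by
      simp [Matrix.mul_apply, Matrix.mulVec, dotProduct]
    rw [lhs_eq, Matrix.mul_diagonal]
    by_cases h0 : hH.eigenvalues j = 0
    · have : H.mulVec (fun k => U k j) = 0 := by rw [hcol, h0, zero_smul]
      rw [hPid _ this]
      simp [hinddef, h0]
    · have hPHv : P.mulVec (H.mulVec (fun k => U k j)) = 0 := by
        rw [Matrix.mulVec_mulVec, hPH, Matrix.zero_mulVec]
      rw [hcol] at hPHv
      have : (hH.eigenvalues j) • P.mulVec (fun k => U k j) = 0 := by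
        simpa [Matrix.mulVec_smul] using hPHv
      have hz := smul_eq_zero.mp this
      simp only [h0, false_or] at hz
      rw [hz]
      simp [hinddef, h0]
  have hsum : H + P = U * Matrix.diagonal (fun i => hH.eigenvalues i + ind i) * star U := by
    have h1 : H = U * Matrix.diagonal hH.eigenvalues * star U := by
      calc H = H * (U * star U) := by rw [hU2, mul_one]
      _ = (H * U) * star U := by rw [Matrix.mul_assoc]
      _ = _ := by rw [hHU]
    have h2 : P = U * Matrix.diagonal ind * star U := by
      calc P = P * (U * star U) := by rw [hU2, mul_one]
      _ = (P * U) * star U := by rw [Matrix.mul_assoc]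
      _ = _ := by rw [hPU]
    conv_lhs => rw [h1, h2]
    rw [← Matrix.add_mul, ← Matrix.mul_add, Matrix.diagonal_add]
  have hdet : (H + P).det = ∏ i, (hH.eigenvalues i + ind i) := by
    rw [hsum, Matrix.det_mul, Matrix.det_mul]
    have : U.det * (star U).det = 1 := by rw [← Matrix.det_mul, hU2, Matrix.det_one]
    calc U.det * (Matrix.diagonal fun i => hH.eigenvalues i + ind i).det * (star U).det
        = (Matrix.diagonal fun i => hH.eigenvalues i + ind i).det * (U.det * (star U).det) := by ring
      _ = _ := by rw [this, mul_one, Matrix.det_diagonal]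
  have hfac : ∀ i, 0 < hH.eigenvalues i + ind i := by
    intro i
    by_cases h0 : hH.eigenvalues i = 0
    · simp [hinddef, h0]
    · have := hpsd.eigenvalues_nonneg i
      have : 0 < hH.eigenvalues i := lt_of_le_of_ne this (Ne.symm h0)
      simp [hinddef, h0, this]
  constructor
  · rw [hdet, detPlus, ← Finset.prod_filter_mul_prod_filter_not Finset.univ (fun i => 0 < hH.eigenvalues i)]
    have h1 : ∀ i ∈ Finset.univ.filter (fun i => 0 < hH.eigenvalues i),
        hH.eigenvalues i + ind i = hH.eigenvalues i := by
      intro i hi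
      simp only [Finset.mem_filter] at hi
      simp [hinddef, ne_of_gt hi.2]
    have h2 : ∀ i ∈ Finset.univ.filter (fun i => ¬ 0 < hH.eigenvalues i),
        hH.eigenvalues i + ind i = 1 := by
      intro i hi
      simp only [Finset.mem_filter] at hi
      have h0 : hH.eigenvalues i = 0 := le_antisymm (not_lt.mp hi.2) (hpsd.eigenvalues_nonneg i)
      simp [hinddef, h0]
    rw [Finset.prod_congr rfl h1, Finset.prod_congr rfl h2, Finset.prod_const_one, mul_one]
  · rw [hdet]
    exact Finset.prod_pos (fun i _ => hfac i)

/-- Trace–log telescoping identity in finite dimensions: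
if `H, H₀` are symmetric PSD with common kernel `K`, `π` is the orthogonal projection
onto `K`, and `F` is symmetric with `Fπ = πF = 0` and `F H₀ F + π = I`, then
`log det⁺ H − log det⁺ H₀ = log det(F H F + π)`. -/
theorem trace_log_telescoping
    {n : ℕ} (H H₀ F P : Matrix (Fin n) (Fin n) ℝ)
    (hH : H.IsHermitian) (hH₀ : H₀.IsHermitian) (hF : F.IsHermitian) (hP : P.IsHermitian)
    (hHpsd : H.PosSemidef) (hH₀psd : H₀.PosSemidef)
    (K : Submodule ℝ (Fin n → ℝ))
    (hker : LinearMap.ker (Matrix.mulVecLin H) = K)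
    (hker₀ : LinearMap.ker (Matrix.mulVecLin H₀) = K)
    (hPproj : P * P = P)
    (hPran : ∀ x : Fin n → ℝ, P.mulVec x ∈ K) (hPid : ∀ x ∈ K, P.mulVec x = x)
    (hFP : F * P = 0) (hPF : P * F = 0)
    (hFHF : F * H₀ * F + P = 1) :
    Real.log (detPlus H hH) - Real.log (detPlus H₀ hH₀)
      = Real.log (F * H * F + P).det := by
  -- M * P = 0 and P * M = 0 for M ∈ {H, H₀}
  have hMP : ∀ (M : Matrix (Fin n) (Fin n) ℝ), M.IsHermitian →
      LinearMap.ker (Matrix.mulVecLin M) = K → M * P = 0 ∧ P * M = 0 := by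
    intro M hM hkerM
    have h1 : M * P = 0 := by
      ext i j
      have hmem : P.mulVec (Pi.single j 1) ∈ K := hPran _
      rw [← hkerM, LinearMap.mem_ker] at hmem
      have h2 : M.mulVec (P.mulVec (Pi.single j 1)) = 0 := hmem
      rw [Matrix.mulVec_mulVec] at h2
      have h3 := congrFun h2 i
      simpa [Matrix.mulVec_single] using h3
    refine ⟨h1, ?_⟩
    have h4 : (M * P)ᴴ = 0 := by rw [h1]; simp
    rwa [Matrix.conjTranspose_mul, hP, hM] at h4
  obtain ⟨hHP, hPH⟩ := hMP H hH hker
  obtain ⟨hH₀P, hPH₀⟩ := hMP H₀ hH₀ hker₀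
  have hPidH : ∀ x : Fin n → ℝ, H.mulVec x = 0 → P.mulVec x = x := by
    intro x hx
    exact hPid x (hker ▸ LinearMap.mem_ker.mpr hx)
  have hPidH₀ : ∀ x : Fin n → ℝ, H₀.mulVec x = 0 → P.mulVec x = x := by
    intro x hx
    exact hPid x (hker₀ ▸ LinearMap.mem_ker.mpr hx)
  obtain ⟨haeq, hapos⟩ := det_add_proj H P hH hHpsd hPH hPidH
  obtain ⟨hbeq, hbpos⟩ := det_add_proj H₀ P hH₀ hH₀psd hPH₀ hPidH₀
  -- key sandwich identity
  have key : ∀ (M : Matrix (Fin n) (Fin n) ℝ), M * P = 0 → P * M = 0 →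
      (F + P) * (M + P) * (F + P) = F * M * F + P := by
    intro M hMP0 hPM0
    have step1 : (F + P) * (M + P) = F * M + P := by
      rw [Matrix.add_mul, Matrix.mul_add, Matrix.mul_add, hFP, hPM0, hPproj]
      simp
    rw [step1, Matrix.add_mul, Matrix.mul_add, Matrix.mul_assoc F M P, hMP0,
      Matrix.mul_add, hPF, hPproj]
    simp
  have keyH := key H hHP hPH
  have keyH₀ := key H₀ hH₀P hPH₀
  set a := (H + P).det with ha
  set b := (H₀ + P).det with hb
  set c := (F + P).det with hc
  have hcbc : c * b * c = 1 := by
    have := congrArg Matrix.det keyH₀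
    rw [hFHF] at this
    rw [Matrix.det_mul, Matrix.det_mul, Matrix.det_one] at this
    linarith [this]
  have hdetFHF : (F * H * F + P).det = c * a * c := by
    rw [← keyH, Matrix.det_mul, Matrix.det_mul]
  have hbne : b ≠ 0 := ne_of_gt hbpos
  have hcac : c * a * c = a / b := by
    field_simp
    nlinarith [hcbc]
  rw [hdetFHF, hcac, Real.log_div (ne_of_gt hapos) hbne, haeq, hbeq]
end
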